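/- There does not exist a [[4,1,3;1]] entanglement-assisted CSS code. Precisely: there do not exist subspaces C_X, C_Z ⊆ (ZMod 2)^5 (coordinates 1,…,4 are Alice's qubits, coordinate 5 is Bob's qubit) such that (i) a·b = 0 for all a ∈ C_X, b ∈ C_Z, (ii) dim C_X + dim C_Z = 4, (iii) some element of C_X has nonzero coordinate 5 and some element of C_Z has nonzero coordinate 5, and (iv) every vector of Hamming weight ≤ 2 supported on coordinates 1,…,4 that lies in C_Z^⊥ lies in C_X, and every vector of Hamming weight ≤ 2 supported on coordinates 1,…,4 that lies in C_X^⊥ lies in C_Z. -/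
import Mathlib


/-- Hamming weight of a binary vector. -/
def hammingWt {n : ℕ} (v : Fin n → ZMod 2) : ℕ :=
  (Finset.univ.filter fun i => v i ≠ 0).card

/-- Standard bilinear form `a·b = ∑ i, a i * b i` on `(ZMod 2)^n`. -/
def bform {n : ℕ} (a b : Fin n → ZMod 2) : ZMod 2 :=
  ∑ i, a i * b i

abbrev V5 := Fin 5 → ZMod 2

def pdot (a b : ℕ) : ℕ := (0x6996 >>> (a &&& b)) &&& 1
def wle2 (v : ℕ) : Bool := (0x177F >>> v) &&& 1 == 1
def N4 (z0 z1 z2 z3 : ZMod 2) : ℕ := z0.val + 2*z1.val + 4*z2.val + 8*z3.val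
def nf (v : V5) : ℕ := N4 (v 0) (v 1) (v 2) (v 3)
def bit (n k : ℕ) : ZMod 2 := if (n >>> k) &&& 1 = 1 then 1 else 0
def dec (n : ℕ) : V5 := ![bit n 0, bit n 1, bit n 2, bit n 3, 0]

-- basic bridges
lemma bform_expand (a b : V5) :
    bform a b = a 0*b 0 + a 1*b 1 + a 2*b 2 + a 3*b 3 + a 4*b 4 := by
  simp [bform, Fin.sum_univ_five]

lemma bform_comm (a b : V5) : bform a b = bform b a := by
  simp [bform, mul_comm]

lemma vec_eta (v : V5) : v = ![v 0, v 1, v 2, v 3, v 4] := by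
  funext i; fin_cases i <;> rfl

lemma nf_lt (v : V5) : nf v < 16 := by
  have h0 := ZMod.val_lt (v 0); have h1 := ZMod.val_lt (v 1)
  have h2 := ZMod.val_lt (v 2); have h3 := ZMod.val_lt (v 3)
  simp only [nf, N4]; omega

lemma zmod2_cases (z : ZMod 2) : z = 0 ∨ z = 1 := by revert z; decide

lemma ne_zero_eq_one {z : ZMod 2} (h : z ≠ 0) : z = 1 := by revert h; revert z; decide

-- linearity of bform in second argument
lemma bform_add_right (v c d : V5) : bform v (c + d) = bform v c + bform v d := by
  simp [bform, mul_add, Finset.sum_add_distrib]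

lemma bform_smul_right (v : V5) (r : ZMod 2) (c : V5) : bform v (r • c) = r * bform v c := by
  simp [bform, Finset.mul_sum]; apply Finset.sum_congr rfl; intros; ring

lemma ortho_span {v : V5} {S : Set V5} (h : ∀ s ∈ S, bform v s = 0) :
    ∀ c ∈ Submodule.span (ZMod 2) S, bform v c = 0 := by
  intro c hc
  induction hc using Submodule.span_induction with
  | mem s hs => exact h s hs
  | zero => simp [bform]
  | add u w _ _ hu hw => rw [bform_add_right, hu, hw, add_zero]
  | smul r u _ hu => rw [bform_smul_right, hu, mul_zero]

-- spanning family extraction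
set_option synthInstance.maxHeartbeats 1000000 in
lemma exists_spanning (C : Submodule (ZMod 2) V5) (a : V5) (haC : a ∈ C) (ha4 : a 4 = 1)
    (k : ℕ) (hk : Module.finrank (ZMod 2) C = k + 1) :
    ∃ f : Fin k → V5, (∀ i, f i ∈ C ∧ f i 4 = 0) ∧
      C = Submodule.span (ZMod 2) (insert a (Set.range f)) := by
  classical
  set φ : V5 →ₗ[ZMod 2] ZMod 2 := LinearMap.proj 4 with hφ
  set ψ : C →ₗ[ZMod 2] ZMod 2 := φ.comp C.subtype with hψ
  have hψa : ψ ⟨a, haC⟩ = 1 := by simp [hψ, hφ, ha4]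
  have hrange : LinearMap.range ψ = ⊤ := by
    rw [Submodule.eq_top_iff']
    intro y
    exact ⟨y • ⟨a, haC⟩, by rw [map_smul, hψa, smul_eq_mul, mul_one]⟩
  have hker : Module.finrank (ZMod 2) (LinearMap.ker ψ) = k := by
    have := LinearMap.finrank_range_add_finrank_ker ψ
    rw [hrange, finrank_top, Module.finrank_self, hk] at this
    omega
  set K : Submodule (ZMod 2) V5 := C ⊓ LinearMap.ker φ with hK
  have hcomap : Submodule.comap C.subtype K = LinearMap.ker ψ := by
    rw [hK, Submodule.comap_inf, Submodule.comap_subtype_self, top_inf_eq, hψ,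
      LinearMap.ker_comp]
  have hKrank : Module.finrank (ZMod 2) K = k := by
    rw [← hker, ← hcomap]
    exact ((Submodule.comapSubtypeEquivOfLe (inf_le_left : K ≤ C)).finrank_eq).symm
  let bK := Module.finBasisOfFinrankEq (ZMod 2) K hKrank
  refine ⟨fun i => (bK i : V5), fun i => ⟨(bK i).2.1, ?_⟩, ?_⟩
  · have := (bK i).2.2
    simpa [hφ] using this
  · have hKspan : Submodule.span (ZMod 2) (Set.range fun i => ((bK i : K) : V5)) = K := by
    -- span of images of basis
      have : (fun i => ((bK i : K) : V5)) = K.subtype ∘ bK := rfl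
      rw [this, Set.range_comp, Submodule.span_image, bK.span_eq, Submodule.map_top,
        Submodule.range_subtype]
    apply le_antisymm
    · intro c hc
      have hr : c - c 4 • a ∈ K := by
        constructor
        · exact sub_mem hc (Submodule.smul_mem _ _ haC)
        · simp [hφ, LinearMap.mem_ker, ha4]
      have h1 : c - c 4 • a ∈ Submodule.span (ZMod 2) (insert a (Set.range fun i => ((bK i : K) : V5))) := by
        apply Submodule.span_mono (Set.subset_insert _ _)
        rw [hKspan]; exact hr
      have h2 : a ∈ Submodule.span (ZMod 2) (insert a (Set.range fun i => ((bK i : K) : V5))) :=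
        Submodule.subset_span (Set.mem_insert _ _)
      have := add_mem h1 (Submodule.smul_mem _ (c 4) h2)
      simpa using this
    · rw [Submodule.span_le]
      rintro x (rfl | ⟨i, rfl⟩)
      · exact haC
      · exact (bK i).2.1

-- scalar dot bridges (decide)
lemma d11s : ∀ z0 z1 z2 z3 w0 w1 w2 w3 : ZMod 2,
    (z0*w0+z1*w1+z2*w2+z3*w3+1*1 = 0) ↔ pdot (N4 z0 z1 z2 z3) (N4 w0 w1 w2 w3) = 1 := by decide
lemma d10s : ∀ z0 z1 z2 z3 w0 w1 w2 w3 : ZMod 2,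
    (z0*w0+z1*w1+z2*w2+z3*w3+1*0 = 0) ↔ pdot (N4 z0 z1 z2 z3) (N4 w0 w1 w2 w3) = 0 := by decide
lemma d01s : ∀ z0 z1 z2 z3 w0 w1 w2 w3 : ZMod 2,
    (z0*w0+z1*w1+z2*w2+z3*w3+0*1 = 0) ↔ pdot (N4 z0 z1 z2 z3) (N4 w0 w1 w2 w3) = 0 := by decide
lemma d00s : ∀ z0 z1 z2 z3 w0 w1 w2 w3 : ZMod 2,
    (z0*w0+z1*w1+z2*w2+z3*w3+0*0 = 0) ↔ pdot (N4 z0 z1 z2 z3) (N4 w0 w1 w2 w3) = 0 := by decide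

lemma bform11 {a b : V5} (ha : a 4 = 1) (hb : b 4 = 1) :
    bform a b = 0 ↔ pdot (nf a) (nf b) = 1 := by
  rw [bform_expand, ha, hb]; exact d11s _ _ _ _ _ _ _ _
lemma bform10 {a b : V5} (ha : a 4 = 1) (hb : b 4 = 0) :
    bform a b = 0 ↔ pdot (nf a) (nf b) = 0 := by
  rw [bform_expand, ha, hb]; exact d10s _ _ _ _ _ _ _ _
lemma bform01 {a b : V5} (ha : a 4 = 0) (hb : b 4 = 1) :
    bform a b = 0 ↔ pdot (nf a) (nf b) = 0 := by
  rw [bform_expand, ha, hb]; exact d01s _ _ _ _ _ _ _ _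
lemma bform00 {a b : V5} (ha : a 4 = 0) (hb : b 4 = 0) :
    bform a b = 0 ↔ pdot (nf a) (nf b) = 0 := by
  rw [bform_expand, ha, hb]; exact d00s _ _ _ _ _ _ _ _

-- dec lemmas
lemma dec4 (n : ℕ) : dec n 4 = 0 := rfl
lemma wt_dec : ∀ n : Fin 16, wle2 n.val = true → hammingWt (dec n.val) ≤ 2 := by decide
lemma nf_dec : ∀ n : Fin 16, nf (dec n.val) = n.val := by decide

lemma N4_add : ∀ z0 z1 z2 z3 w0 w1 w2 w3 : ZMod 2,
    N4 (z0+w0) (z1+w1) (z2+w2) (z3+w3) = N4 z0 z1 z2 z3 ^^^ N4 w0 w1 w2 w3 := by decide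
lemma nf_add (u w : V5) : nf (u + w) = nf u ^^^ nf w :=
  N4_add (u 0) (u 1) (u 2) (u 3) (w 0) (w 1) (w 2) (w 3)
lemma nf_zero : nf (0 : V5) = 0 := rfl

-- span membership extraction
lemma mem_single_nf {a v : V5} (ha4 : a 4 = 1) (hv4 : v 4 = 0)
    (h : v ∈ Submodule.span (ZMod 2) ({a} : Set V5)) : nf v = 0 := by
  obtain ⟨c, hc⟩ := Submodule.mem_span_singleton.1 h
  have h4 : c = 0 := by
    have := congrFun hc 4
    simp only [Pi.smul_apply, smul_eq_mul, ha4, hv4, mul_one] at this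
    exact this
  rw [h4] at hc
  rw [← hc, zero_smul]
  exact nf_zero

lemma mem_pair_nf {a x v : V5} (ha4 : a 4 = 1) (hx4 : x 4 = 0) (hv4 : v 4 = 0)
    (h : v ∈ Submodule.span (ZMod 2) ({a, x} : Set V5)) : nf v = 0 ∨ nf v = nf x := by
  obtain ⟨c, d, hcd⟩ := Submodule.mem_span_pair.1 h
  have h4 : c = 0 := by
    have := congrFun hcd 4
    simp only [Pi.add_apply, Pi.smul_apply, smul_eq_mul, ha4, hx4, hv4, mul_one, mul_zero,
      add_zero] at this
    exact this
  rw [h4, zero_smul, zero_add] at hcd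
  rcases zmod2_cases d with hd | hd <;> rw [hd] at hcd
  · left; rw [← hcd, zero_smul]; exact nf_zero
  · right; rw [← hcd, one_smul]

lemma mem_triple_nf {b y z v : V5} (hb4 : b 4 = 1) (hy4 : y 4 = 0) (hz4 : z 4 = 0)
    (hv4 : v 4 = 0) (h : v ∈ Submodule.span (ZMod 2) ({b, y, z} : Set V5)) :
    nf v = 0 ∨ nf v = nf y ∨ nf v = nf z ∨ nf v = nf y ^^^ nf z := by
  obtain ⟨c, w, hw, hv⟩ := Submodule.mem_span_insert.1 h
  obtain ⟨d, e, hde⟩ := Submodule.mem_span_pair.1 hw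
  have hw4 : w 4 = 0 := by
    rw [← hde]
    simp only [Pi.add_apply, Pi.smul_apply, smul_eq_mul, hy4, hz4, mul_zero, add_zero]
  have h4 : c = 0 := by
    have := congrFun hv 4
    simp only [Pi.add_apply, Pi.smul_apply, smul_eq_mul, hb4, hv4, hw4, mul_one, add_zero] at this
    exact this.symm
  rw [h4, zero_smul, zero_add] at hv
  subst hv
  rw [← hde]
  rcases zmod2_cases d with hd | hd <;> rcases zmod2_cases e with he | he <;>
    rw [hd, he] <;> simp [nf_add, nf_zero]

set_option maxHeartbeats 4000000 in
set_option synthInstance.maxHeartbeats 2000000 in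
set_option synthInstance.maxSize 3000 in
theorem key22N : ∀ a b : Fin 16, pdot a.val b.val = 1 → ∀ x : Fin 16, pdot x.val b.val = 0 →
    ∀ y : Fin 16, pdot a.val y.val = 0 → pdot x.val y.val = 0 →
    ¬( (∀ v : Fin 16, wle2 v.val = true → pdot v.val b.val = 0 → pdot v.val y.val = 0 →
          (v.val = 0 ∨ v.val = x.val)) ∧
       (∀ v : Fin 16, wle2 v.val = true → pdot v.val a.val = 0 → pdot v.val x.val = 0 →
          (v.val = 0 ∨ v.val = y.val)) ) := by
  decide

set_option maxHeartbeats 4000000 in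
set_option synthInstance.maxHeartbeats 2000000 in
set_option synthInstance.maxSize 3000 in
theorem key13N : ∀ a b : Fin 16, pdot a.val b.val = 1 → ∀ y : Fin 16, pdot a.val y.val = 0 →
    ∀ z : Fin 16, pdot a.val z.val = 0 →
    ¬( (∀ v : Fin 16, wle2 v.val = true → pdot v.val b.val = 0 → pdot v.val y.val = 0 →
          pdot v.val z.val = 0 → v.val = 0) ∧
       (∀ v : Fin 16, wle2 v.val = true → pdot v.val a.val = 0 →
          (v.val = 0 ∨ v.val = y.val ∨ v.val = z.val ∨ v.val = y.val ^^^ z.val)) ) := by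
  decide

lemma case22 (CX CZ : Submodule (ZMod 2) V5)
    (horth : ∀ u ∈ CX, ∀ w ∈ CZ, bform u w = 0)
    {a x b y : V5} (ha4 : a 4 = 1) (hx4 : x 4 = 0) (hb4 : b 4 = 1) (hy4 : y 4 = 0)
    (haX : a ∈ CX) (hxX : x ∈ CX) (hbZ : b ∈ CZ) (hyZ : y ∈ CZ)
    (hXs : CX = Submodule.span (ZMod 2) ({a, x} : Set V5))
    (hZs : CZ = Submodule.span (ZMod 2) ({b, y} : Set V5))
    (hX : ∀ v : V5, v 4 = 0 → hammingWt v ≤ 2 → (∀ c ∈ CZ, bform v c = 0) → v ∈ CX)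
    (hZ : ∀ v : V5, v 4 = 0 → hammingWt v ≤ 2 → (∀ c ∈ CX, bform v c = 0) → v ∈ CZ) :
    False := by
  apply key22N ⟨nf a, nf_lt a⟩ ⟨nf b, nf_lt b⟩ ((bform11 ha4 hb4).1 (horth a haX b hbZ))
    ⟨nf x, nf_lt x⟩ ((bform01 hx4 hb4).1 (horth x hxX b hbZ))
    ⟨nf y, nf_lt y⟩ ((bform10 ha4 hy4).1 (horth a haX y hyZ))
    ((bform00 hx4 hy4).1 (horth x hxX y hyZ))
  constructor
  · intro v hw h1 h2
    have hv : dec v.val ∈ CX := by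
      apply hX (dec v.val) (dec4 v.val) (wt_dec v hw)
      rw [hZs]
      apply ortho_span
      intro s hs
      simp only [Set.mem_insert_iff, Set.mem_singleton_iff] at hs
      rcases hs with rfl | rfl
      · exact (bform01 (dec4 v.val) hb4).2 (by rw [nf_dec]; exact h1)
      · exact (bform00 (dec4 v.val) hy4).2 (by rw [nf_dec]; exact h2)
    rw [hXs] at hv
    have := mem_pair_nf ha4 hx4 (dec4 v.val) hv
    rwa [nf_dec] at this
  · intro v hw h1 h2
    have hv : dec v.val ∈ CZ := by
      apply hZ (dec v.val) (dec4 v.val) (wt_dec v hw)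
      rw [hXs]
      apply ortho_span
      intro s hs
      simp only [Set.mem_insert_iff, Set.mem_singleton_iff] at hs
      rcases hs with rfl | rfl
      · exact (bform01 (dec4 v.val) ha4).2 (by rw [nf_dec]; exact h1)
      · exact (bform00 (dec4 v.val) hx4).2 (by rw [nf_dec]; exact h2)
    rw [hZs] at hv
    have := mem_pair_nf hb4 hy4 (dec4 v.val) hv
    rwa [nf_dec] at this

lemma case13 (CX CZ : Submodule (ZMod 2) V5)
    (horth : ∀ u ∈ CX, ∀ w ∈ CZ, bform u w = 0)
    {a b y z : V5} (ha4 : a 4 = 1) (hb4 : b 4 = 1) (hy4 : y 4 = 0) (hz4 : z 4 = 0)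
    (haX : a ∈ CX) (hbZ : b ∈ CZ) (hyZ : y ∈ CZ) (hzZ : z ∈ CZ)
    (hXs : CX = Submodule.span (ZMod 2) ({a} : Set V5))
    (hZs : CZ = Submodule.span (ZMod 2) ({b, y, z} : Set V5))
    (hX : ∀ v : V5, v 4 = 0 → hammingWt v ≤ 2 → (∀ c ∈ CZ, bform v c = 0) → v ∈ CX)
    (hZ : ∀ v : V5, v 4 = 0 → hammingWt v ≤ 2 → (∀ c ∈ CX, bform v c = 0) → v ∈ CZ) :
    False := by
  apply key13N ⟨nf a, nf_lt a⟩ ⟨nf b, nf_lt b⟩ ((bform11 ha4 hb4).1 (horth a haX b hbZ))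
    ⟨nf y, nf_lt y⟩ ((bform10 ha4 hy4).1 (horth a haX y hyZ))
    ⟨nf z, nf_lt z⟩ ((bform10 ha4 hz4).1 (horth a haX z hzZ))
  constructor
  · intro v hw h1 h2 h3
    have hv : dec v.val ∈ CX := by
      apply hX (dec v.val) (dec4 v.val) (wt_dec v hw)
      rw [hZs]
      apply ortho_span
      intro s hs
      simp only [Set.mem_insert_iff, Set.mem_singleton_iff] at hs
      rcases hs with rfl | rfl | rfl
      · exact (bform01 (dec4 v.val) hb4).2 (by rw [nf_dec]; exact h1)
      · exact (bform00 (dec4 v.val) hy4).2 (by rw [nf_dec]; exact h2)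
      · exact (bform00 (dec4 v.val) hz4).2 (by rw [nf_dec]; exact h3)
    rw [hXs] at hv
    have := mem_single_nf ha4 (dec4 v.val) hv
    rwa [nf_dec] at this
  · intro v hw h1
    have hv : dec v.val ∈ CZ := by
      apply hZ (dec v.val) (dec4 v.val) (wt_dec v hw)
      rw [hXs]
      apply ortho_span
      intro s hs
      simp only [Set.mem_singleton_iff] at hs
      rcases hs with rfl
      exact (bform01 (dec4 v.val) ha4).2 (by rw [nf_dec]; exact h1)
    rw [hZs] at hv
    have := mem_triple_nf hb4 hy4 hz4 (dec4 v.val) hv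
    rwa [nf_dec] at this

lemma range_fin_one (f : Fin 1 → V5) : Set.range f = {f 0} := by
  rw [Set.range_unique]; rfl

lemma range_fin_two (f : Fin 2 → V5) : Set.range f = {f 0, f 1} := by
  ext w
  constructor
  · rintro ⟨i, rfl⟩
    fin_cases i
    · exact Set.mem_insert _ _
    · exact Set.mem_insert_of_mem _ rfl
  · rintro (rfl | rfl)
    · exact ⟨0, rfl⟩
    · exact ⟨1, rfl⟩

/-- There is no [[4,1,3;1]] entanglement-assisted CSS code.  Coordinates
`0,…,3` of `Fin 5` are Alice's four qubits and coordinate `4` is Bob's qubit. -/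
theorem no_4_1_3_1_EA_CSS_code :
    ¬ ∃ (CX CZ : Submodule (ZMod 2) (Fin 5 → ZMod 2)),
      (∀ a ∈ CX, ∀ b ∈ CZ, bform a b = 0) ∧
      Module.finrank (ZMod 2) CX + Module.finrank (ZMod 2) CZ = 4 ∧
      (∃ a ∈ CX, a 4 ≠ 0) ∧ (∃ b ∈ CZ, b 4 ≠ 0) ∧
      (∀ v : Fin 5 → ZMod 2, v 4 = 0 → hammingWt v ≤ 2 →
        (∀ c ∈ CZ, bform v c = 0) → v ∈ CX) ∧
      (∀ v : Fin 5 → ZMod 2, v 4 = 0 → hammingWt v ≤ 2 →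
        (∀ c ∈ CX, bform v c = 0) → v ∈ CZ) := by
  rintro ⟨CX, CZ, horth, hrank, ⟨a, haX, ha4⟩, ⟨b, hbZ, hb4⟩, hX, hZ⟩
  replace ha4 : a 4 = 1 := ne_zero_eq_one ha4
  replace hb4 : b 4 = 1 := ne_zero_eq_one hb4
  have hXne : Module.finrank (ZMod 2) CX ≠ 0 := by
    intro h
    rw [Submodule.finrank_eq_zero] at h
    rw [h, Submodule.mem_bot] at haX
    rw [haX] at ha4
    simp at ha4
  have hZne : Module.finrank (ZMod 2) CZ ≠ 0 := by
    intro h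
    rw [Submodule.finrank_eq_zero] at h
    rw [h, Submodule.mem_bot] at hbZ
    rw [hbZ] at hb4
    simp at hb4
  have horth' : ∀ u ∈ CZ, ∀ w ∈ CX, bform u w = 0 := fun u hu w hw => by
    rw [bform_comm]; exact horth w hw u hu
  rcases (by omega : (Module.finrank (ZMod 2) CX = 0 + 1 ∧ Module.finrank (ZMod 2) CZ = 2 + 1) ∨
      (Module.finrank (ZMod 2) CX = 1 + 1 ∧ Module.finrank (ZMod 2) CZ = 1 + 1) ∨
      (Module.finrank (ZMod 2) CX = 2 + 1 ∧ Module.finrank (ZMod 2) CZ = 0 + 1)) with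
    ⟨h1, h2⟩ | ⟨h1, h2⟩ | ⟨h1, h2⟩
  · obtain ⟨f, hf, hCX⟩ := exists_spanning CX a haX ha4 0 h1
    obtain ⟨g, hg, hCZ⟩ := exists_spanning CZ b hbZ hb4 2 h2
    rw [Set.range_eq_empty f, show (insert a ∅ : Set V5) = {a} by simp] at hCX
    rw [range_fin_two g] at hCZ
    exact case13 CX CZ horth ha4 hb4 (hg 0).2 (hg 1).2 haX hbZ (hg 0).1 (hg 1).1 hCX hCZ hX hZ
  · obtain ⟨f, hf, hCX⟩ := exists_spanning CX a haX ha4 1 h1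
    obtain ⟨g, hg, hCZ⟩ := exists_spanning CZ b hbZ hb4 1 h2
    rw [range_fin_one f] at hCX
    rw [range_fin_one g] at hCZ
    exact case22 CX CZ horth ha4 (hf 0).2 hb4 (hg 0).2 haX (hf 0).1 hbZ (hg 0).1 hCX hCZ hX hZ
  · obtain ⟨f, hf, hCX⟩ := exists_spanning CX a haX ha4 2 h1
    obtain ⟨g, hg, hCZ⟩ := exists_spanning CZ b hbZ hb4 0 h2
    rw [range_fin_two f] at hCX
    rw [Set.range_eq_empty g, show (insert b ∅ : Set V5) = {b} by simp] at hCZ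
    exact case13 CZ CX horth' hb4 ha4 (hf 0).2 (hf 1).2 hbZ haX (hf 0).1 (hf 1).1 hCZ hCX hZ hX
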